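/- arXiv:2402.14508 — 5 statements merged into one kernel-verified Lean document; each statement's English description precedes it below -/
import Mathlib

section
/- In a substitutional subshift on H = F^(N) (finitely supported functions N → F, F a finite group), the sets X_n defined by X_0 = A^H and X_{n+1} = ⋃_{f∈F} f_{@0} · τ̃(X_n) are H-invariant and nested (X_{n+1} ⊆ X_n). -/
/-!
Substitutional subshifts on the locally finite group `H = F^(ℕ)` of finitely
supported functions `ℕ → F` (here written additively, `H = ℕ →₀ F`),
acting on `A^H` by the shift `(g • x) h = x (h + g)`.
We show the approximating sets `X₀ = A^H`, `X_{n+1} = ⋃_{f ∈ F} f_{@0} · τ̃(X_n)`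
are `H`-invariant and nested.
-/

variable {F : Type*} [AddGroup F] [Fintype F] {A : Type*} [Fintype A]

/-- The element `(f, h₀, h₁, …)` of `H = ℕ →₀ F`: value `f` at position `0`,
and `h` shifted up by one. -/
noncomputable def cons (f : F) (h : ℕ →₀ F) : ℕ →₀ F :=
  Finsupp.single 0 f + Finsupp.embDomain ⟨Nat.succ, Nat.succ_injective⟩ h

/-- The (non-deterministic) map `τ̃ : A^H → 𝒫(A^H)` induced by a substitution
`τ : A → 𝒫(A^F)`:  `x' ∈ τ̃(x)` iff for every `(f₁,f₂,…) ∈ H`, the tuple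
`f₀ ↦ x'(f₀,f₁,f₂,…)` belongs to `τ(x(f₁,f₂,…))`. -/
noncomputable def tildeTau (τ : A → Set (F → A)) (x : (ℕ →₀ F) → A) :
    Set ((ℕ →₀ F) → A) :=
  {y | ∀ h : ℕ →₀ F, (fun f : F => y (cons f h)) ∈ τ (x h)}

/-- `X₀ = A^H` and `X_{n+1} = ⋃_{f ∈ F} f_{@0} · τ̃(X_n)`, where `f_{@0}`
(the element of `H` supported at `0` with value `f`) acts by the shift. -/
noncomputable def subLevel (τ : A → Set (F → A)) : ℕ → Set ((ℕ →₀ F) → A)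
  | 0 => Set.univ
  | n + 1 =>
      {z | ∃ f : F, ∃ x ∈ subLevel τ n, ∃ y ∈ tildeTau τ x,
        z = fun h => y (h + Finsupp.single 0 f)}

/-!
Every `g ∈ H` is `cons c g'` (its value at `0` and its tail), and `y ↦ y (· + cons 0 g')`
maps `τ̃(x)` into `τ̃(x (· + g'))`. Writing `g + f_{@0} = cons c g'`, the shift by `g` thus
carries `f_{@0} · τ̃(X_n)` into `c_{@0} · τ̃(X_n)` once `X_n` is known to be invariant, so
invariance follows by induction on `n`. Nestedness is an induction using only that
`X_{n+1}` is monotone in `X_n`.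
-/

section

variable {G B : Type*} [AddGroup G]

@[simp]
lemma cons_apply_zero (f : G) (h : ℕ →₀ G) : cons f h 0 = f := by
  simp [cons, Finsupp.embDomain_of_notMem_range]

@[simp]
lemma cons_apply_succ (f : G) (h : ℕ →₀ G) (n : ℕ) : cons f h (n + 1) = h n := by
  simpa [cons] using Finsupp.embDomain_apply_self ⟨Nat.succ, Nat.succ_injective⟩ h n

lemma single_zero_eq_cons (f : G) : Finsupp.single 0 f = cons f 0 := by
  ext (_ | n) <;> simp

lemma cons_add_cons (f f' : G) (h h' : ℕ →₀ G) :
    cons f h + cons f' h' = cons (f + f') (h + h') := by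
  ext (_ | n) <;> simp

lemma exists_eq_cons (g : ℕ →₀ G) : ∃ f h, g = cons f h :=
  ⟨g 0, g.comapDomain Nat.succ Nat.succ_injective.injOn, by ext (_ | n) <;> simp⟩

lemma shift_cons_zero_mem_tildeTau {τ : B → Set (G → B)} {x y : (ℕ →₀ G) → B}
    (hy : y ∈ tildeTau τ x) (g : ℕ →₀ G) :
    (fun h => y (h + cons 0 g)) ∈ tildeTau τ (fun h => x (h + g)) := by
  intro h
  simpa only [cons_add_cons, add_zero] using hy (h + g)

lemma shift_mem_subLevel {τ : B → Set (G → B)} :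
    ∀ {n : ℕ} (g : ℕ →₀ G), ∀ x ∈ subLevel τ n, (fun h => x (h + g)) ∈ subLevel τ n
  | 0, _, _, _ => trivial
  | n + 1, g, _, ⟨f, x, hx, y, hy, rfl⟩ => by
    obtain ⟨c, g', hg⟩ := exists_eq_cons (g + Finsupp.single 0 f)
    refine ⟨c, _, shift_mem_subLevel g' x hx, _, shift_cons_zero_mem_tildeTau hy g', ?_⟩
    have hsplit : g + Finsupp.single 0 f = Finsupp.single 0 c + cons 0 g' := by
      rw [hg, single_zero_eq_cons, cons_add_cons, add_zero, zero_add]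
    funext h
    simp only [add_assoc, hsplit]

lemma subLevel_succ_subset (τ : B → Set (G → B)) :
    ∀ n : ℕ, subLevel τ (n + 1) ⊆ subLevel τ n
  | 0 => Set.subset_univ _
  | n + 1 => fun _ ⟨f, x, hx, y, hy, hz⟩ => ⟨f, x, subLevel_succ_subset τ n hx, y, hy, hz⟩

end

/-- The sets `X_n` are `H`-invariant and nested. -/
theorem subLevel_invariant_and_nested (τ : A → Set (F → A)) :
    (∀ (n : ℕ) (g : ℕ →₀ F), ∀ x ∈ subLevel τ n,
        (fun h => x (h + g)) ∈ subLevel τ n) ∧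
    (∀ n : ℕ, subLevel τ (n + 1) ⊆ subLevel τ n) :=
  ⟨fun _ => shift_mem_subLevel, subLevel_succ_subset τ⟩
end

section
/- The cocycle identity holds for the map η : L × X → (Z/3)² defined on generators by η(a, x) = (x(½), −x(½)) and η(b, x) = (1 − x(½), −x(½)): extended by η(1, x) = 0 and η(gh, x) = η(g, h·x) + η(h, x), the map is well-defined on the lamplighter group L, i.e. it respects the defining relations (aⁿb⁻ⁿ)² = 1. -/
/-!
The lamplighter group acts on lamp configurations `X = (ℤ/2)^(ℤ+½)` (the lamp
at position `i + ½` stored at index `i`); `a` shifts, `b` shifts and flips the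
lamp crossing between positions `½` and `-½`.  The cocycle
`η : L × X → (ℤ/3)²` is defined on the generators by
`η(a,x) = (x(½), -x(½))`, `η(b,x) = (1 - x(½), -x(½))`, extended to words by
`η(1,x) = 0` and the cocycle rule `η(gh,x) = η(g, h·x) + η(h, x)` (with
`η(g⁻¹,x) = -η(g, g⁻¹x)`).  We prove the extension satisfies the cocycle rule
on concatenation of words, and is well defined on the lamplighter group:
it vanishes on the defining relations `(aⁿ b⁻ⁿ)²`, whose action is trivial.
-/

abbrev LampConf : Type := ℤ → ZMod 2

def lampA : Equiv.Perm LampConf :=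
  (Equiv.addRight (-1 : ℤ)).arrowCongr (Equiv.refl (ZMod 2))

def lampFlip : LampConf := fun i => if i = -1 then 1 else 0

def lampB : Equiv.Perm LampConf := lampA.trans (Equiv.addLeft lampFlip)

abbrev C0 := ZMod 3 × ZMod 3

/-- The lamp at position `½` (index `0`), viewed in `ℤ/3`. -/
def lampHalf (x : LampConf) : ZMod 3 := ((x 0).val : ZMod 3)

/-- `η` on the generators: `false ↦ a`, `true ↦ b`. -/
def etaGen : Bool → LampConf → C0
  | false, x => (lampHalf x, -lampHalf x)
  | true, x => (1 - lampHalf x, -lampHalf x)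

def stepGen : Bool → Equiv.Perm LampConf
  | false => lampA
  | true => lampB

/-- A letter of a word in the free group on `{a, b}`: a generator together
with an inversion flag. -/
abbrev Letter := Bool × Bool

def actLetter (l : Letter) : Equiv.Perm LampConf :=
  if l.2 then (stepGen l.1)⁻¹ else stepGen l.1

/-- `η` on letters, with `η(g⁻¹, x) = -η(g, g⁻¹ x)`. -/
def etaLetter (l : Letter) (x : LampConf) : C0 :=
  if l.2 then -(etaGen l.1 ((stepGen l.1)⁻¹ x)) else etaGen l.1 x

/-- The action of a word (product of its letters, leftmost acting last). -/
def actWord : List Letter → LampConf → LampConf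
  | [], x => x
  | l :: w, x => actLetter l (actWord w x)

/-- `η` extended to words by `η([],x) = 0` and the cocycle rule. -/
def etaWord : List Letter → LampConf → C0
  | [], _ => 0
  | l :: w, x => etaLetter l (actWord w x) + etaWord w x

/-- The word `(aⁿ b⁻ⁿ)²`. -/
def relWord (n : ℕ) : List Letter :=
  (List.replicate n (false, false) ++ List.replicate n (true, true)) ++
    (List.replicate n (false, false) ++ List.replicate n (true, true))

/-!
The word `w = aⁿ b⁻ⁿ` acts on `X` as the involution flipping the `n` lamps at indices
`-n, …, -1`, and a direct computation gives `η(w, x) = (n - 2 S(x), 0)`, where `S(x) ∈ ℤ/3`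
counts the lit lamps in that window. The flip replaces `S` by `n - S`, so
`η(w², x) = η(w, w x) + η(w, x) = (n - 2 (n - S) + n - 2 S, 0) = 0`.
-/

def lampValue (z : ZMod 2) : ZMod 3 := (z.val : ZMod 3)

lemma lampValue_add_one (z : ZMod 2) : lampValue (z + 1) = 1 - lampValue z := by
  revert z; decide

lemma lampHalf_eq_lampValue (x : LampConf) : lampHalf x = lampValue (x 0) := rfl

lemma lampA_apply (x : LampConf) (i : ℤ) : lampA x i = x (i + 1) := by
  simp [lampA, Equiv.arrowCongr]

lemma lampB_symm_apply (x : LampConf) (i : ℤ) :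
    lampB.symm x i = x (i - 1) + if i = 0 then 1 else 0 := by
  simp [lampB, lampA, lampFlip, Equiv.arrowCongr, sub_eq_add_neg, add_comm]

def windowSum (x : LampConf) (m : ℤ) (n : ℕ) : ZMod 3 :=
  ∑ k ∈ Finset.range n, lampValue (x (m + k))

lemma windowSum_succ (x : LampConf) (m : ℤ) (n : ℕ) :
    windowSum x m (n + 1) = windowSum x m n + lampValue (x (m + n)) :=
  Finset.sum_range_succ (fun k : ℕ => lampValue (x (m + k))) n

lemma windowSum_succ_neg (x : LampConf) (n : ℕ) :
    windowSum x (-↑(n + 1)) (n + 1) = lampValue (x (-1 - n)) + windowSum x (-n) n := by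
  rw [windowSum, Finset.sum_range_succ', add_comm, windowSum]
  congr 1
  · congr 2; push_cast; ring
  · exact Finset.sum_congr rfl fun k _ => by congr 2; push_cast; ring

lemma windowSum_of_flip {x y : LampConf} {m m' : ℤ} {n : ℕ}
    (h : ∀ k < n, y (m' + k) = x (m + k) + 1) :
    windowSum y m' n = n - windowSum x m n :=
  calc windowSum y m' n = ∑ k ∈ Finset.range n, (1 - lampValue (x (m + k))) :=
        Finset.sum_congr rfl fun k hk => by rw [h k (Finset.mem_range.1 hk), lampValue_add_one]
    _ = n - windowSum x m n := by simp [windowSum, Finset.sum_sub_distrib]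

section

variable (u v : List Letter) (n : ℕ) (x : LampConf)

lemma actWord_append : actWord (u ++ v) x = actWord u (actWord v x) := by
  induction u with
  | nil => rfl
  | cons l w ih => simp only [List.cons_append, actWord, ih]

lemma etaWord_append : etaWord (u ++ v) x = etaWord u (actWord v x) + etaWord v x := by
  induction u with
  | nil => simp [etaWord]
  | cons l w ih => simp only [List.cons_append, etaWord, ih, actWord_append, add_assoc]

lemma actWord_replicate_a_apply (i : ℤ) :
    actWord (List.replicate n (false, false)) x i = x (i + n) := by
  induction n generalizing i with
  | zero => simp [actWord]
  | succ n ih =>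
    rw [List.replicate_succ, actWord]
    simp [actLetter, stepGen, lampA_apply, ih, add_comm, add_left_comm]

lemma actWord_replicate_bInv_apply (i : ℤ) :
    actWord (List.replicate n (true, true)) x i
      = x (i - n) + if 0 ≤ i ∧ i < n then 1 else 0 := by
  induction n generalizing i with
  | zero => simp [actWord]
  | succ n ih =>
    rw [List.replicate_succ, actWord]
    simp only [actLetter, stepGen, if_true, Equiv.Perm.inv_def, lampB_symm_apply, ih]
    rw [show i - 1 - (n : ℤ) = i - ↑(n + 1) by push_cast; ring, add_assoc]
    congr 1
    split_ifs <;> first | omega | simp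

lemma etaWord_replicate_a :
    etaWord (List.replicate n (false, false)) x = (windowSum x 0 n, -windowSum x 0 n) := by
  induction n with
  | zero => simp [etaWord, windowSum]; rfl
  | succ n ih =>
    rw [List.replicate_succ, etaWord, ih, windowSum_succ]
    simp only [etaLetter, etaGen, lampHalf_eq_lampValue, actWord_replicate_a_apply]
    simp only [Bool.false_eq_true, if_false, zero_add, Prod.mk_add_mk, neg_add]
    ring_nf

lemma etaWord_replicate_bInv :
    etaWord (List.replicate n (true, true)) x
      = (-windowSum x (-n) n, n - windowSum x (-n) n) := by
  induction n with
  | zero => simp [etaWord, windowSum]; rfl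
  | succ n ih =>
    rw [List.replicate_succ, etaWord, ih, windowSum_succ_neg]
    simp only [etaLetter, stepGen, etaGen, if_true, Equiv.Perm.inv_def, lampHalf_eq_lampValue,
      lampB_symm_apply, actWord_replicate_bInv_apply]
    rw [if_neg (by omega), add_zero, zero_sub, lampValue_add_one]
    ext <;> simp <;> ring

def halfRelWord : List Letter :=
  List.replicate n (false, false) ++ List.replicate n (true, true)

lemma relWord_eq_halfRelWord_append : relWord n = halfRelWord n ++ halfRelWord n := rfl

lemma actWord_halfRelWord_apply (i : ℤ) :
    actWord (halfRelWord n) x i = x i + if -(n : ℤ) ≤ i ∧ i < 0 then 1 else 0 := by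
  rw [halfRelWord, actWord_append, actWord_replicate_a_apply, actWord_replicate_bInv_apply,
    add_sub_cancel_right]
  exact congrArg (x i + ·) (if_congr (by omega) rfl rfl)

lemma actWord_halfRelWord_involutive : actWord (halfRelWord n) (actWord (halfRelWord n) x) = x := by
  funext i
  simp only [actWord_halfRelWord_apply, add_assoc, CharTwo.add_self_eq_zero, add_zero]

lemma etaWord_halfRelWord :
    etaWord (halfRelWord n) x = (n - 2 * windowSum x (-n) n, 0) := by
  have hflip : windowSum (actWord (List.replicate n (true, true)) x) 0 n = n - windowSum x (-n) n :=
    windowSum_of_flip fun k hk => by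
      rw [actWord_replicate_bInv_apply, if_pos (by omega), zero_add, sub_eq_neg_add]
  rw [halfRelWord, etaWord_append, etaWord_replicate_a, etaWord_replicate_bInv, hflip, Prod.mk_add_mk, Prod.mk.injEq]
  constructor <;> ring

lemma windowSum_actWord_halfRelWord :
    windowSum (actWord (halfRelWord n) x) (-n) n = n - windowSum x (-n) n :=
  windowSum_of_flip fun k hk => by rw [actWord_halfRelWord_apply, if_pos (by omega)]

end

/-- The extension of `η` respects the cocycle rule, and vanishes on the
defining relations `(aⁿ b⁻ⁿ)² = 1` of the lamplighter group (whose action on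
`X` is trivial); hence `η` is well defined on the lamplighter group. -/
theorem eta_cocycle_well_defined :
    (∀ (u v : List Letter) (x : LampConf),
        etaWord (u ++ v) x = etaWord u (actWord v x) + etaWord v x) ∧
    (∀ n : ℕ, 1 ≤ n → ∀ x : LampConf,
        actWord (relWord n) x = x ∧ etaWord (relWord n) x = 0) := by
  refine ⟨etaWord_append, fun n _ x => ⟨?_, ?_⟩⟩
  · rw [relWord_eq_halfRelWord_append, actWord_append, actWord_halfRelWord_involutive]
  · rw [relWord_eq_halfRelWord_append, etaWord_append, etaWord_halfRelWord, etaWord_halfRelWord,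
      windowSum_actWord_halfRelWord, Prod.mk_add_mk, add_zero, Prod.mk_eq_zero]
    constructor <;> ring
end

section
/- Let ι : H ↪ G be a subgroup inclusion and X ⊆ A^H a subshift. Then the induction ι_*(X) = {y ∈ A^G : for all g ∈ G, the map h ↦ y(ι(h)·g) belongs to X} is a closed G-invariant subset of A^G, i.e. a subshift on G, and its restriction to H (via h ↦ y(ι(h))) equals X when X is nonempty. -/
/-!
Induction of subshifts along a subgroup inclusion `ι : H ↪ G`:
`ι_*(X) = {y ∈ A^G : ∀ g ∈ G, (h ↦ y(ι(h)·g)) ∈ X}` is a closed `G`-invariant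
subset of `A^G` (a subshift on `G`), and its restriction to `H` (via
`y ↦ (h ↦ y(ι h))`) lands in `X`, with image exactly `X` whenever `ι_*(X)` is
nonempty.  `A^G` carries the product topology (with `A` discrete) and the
shift action `(g·y)(g') = y(g'g)`.
-/

variable {H G A : Type*} [Group H] [Group G] [Finite A]
  [TopologicalSpace A] [DiscreteTopology A]

/-- The induction of an `H`-subshift `X` to `G`. -/
def indShift (ι : H →* G) (X : Set (H → A)) : Set (G → A) :=
  {y | ∀ g : G, (fun h => y (ι h * g)) ∈ X}

theorem induction_is_subshift (ι : H →* G) (hι : Function.Injective ι)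
    (X : Set (H → A)) (hXclosed : IsClosed X)
    (hXinv : ∀ (h : H) (x : H → A), x ∈ X → (fun h' => x (h' * h)) ∈ X) :
    -- ι_*(X) is closed
    IsClosed (indShift ι X) ∧
    -- ι_*(X) is G-invariant
    (∀ (g : G) (y : G → A), y ∈ indShift ι X →
      (fun g' => y (g' * g)) ∈ indShift ι X) ∧
    -- restriction to H lands in X ...
    (∀ y ∈ indShift ι X, (fun h => y (ι h)) ∈ X) ∧
    -- ... with image exactly X when ι_*(X) is nonempty
    ((indShift ι X).Nonempty →
      (fun y : G → A => fun h => y (ι h)) '' indShift ι X = X) := by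
  classical
  refine ⟨?_, ?_, ?_, ?_⟩
  · have heq : indShift ι X = ⋂ g : G, (fun y : G → A => fun h => y (ι h * g)) ⁻¹' X := by
      ext y; simp [indShift, Set.mem_iInter, Set.mem_preimage]
    rw [heq]
    exact isClosed_iInter fun g =>
      hXclosed.preimage (continuous_pi fun h => continuous_apply _)
  · intro g y hy g'
    simpa [mul_assoc] using hy (g' * g)
  · intro y hy
    simpa using hy 1
  · rintro ⟨y0, hy0⟩
    apply Set.Subset.antisymm
    · rintro _ ⟨y, hy, rfl⟩; simpa using hy 1
    · intro x hx
      refine ⟨fun g => if hg : ∃ h, ι h = g then x hg.choose else y0 g, ?_, ?_⟩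
      · intro g
        by_cases hg : ∃ h0, ι h0 = g
        · obtain ⟨h0, rfl⟩ := hg
          have heq : (fun h => if hg : ∃ h', ι h' = ι h * ι h0 then x hg.choose
              else y0 (ι h * ι h0)) = fun h => x (h * h0) := by
            funext h
            have he : ∃ h', ι h' = ι h * ι h0 := ⟨h * h0, by simp⟩
            rw [dif_pos he]
            congr 1
            apply hι
            rw [he.choose_spec, map_mul]
          simpa only [heq] using hXinv h0 x hx
        · have heq : (fun h => if hg' : ∃ h', ι h' = ι h * g then x hg'.choose
              else y0 (ι h * g)) = fun h => y0 (ι h * g) := by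
            funext h
            rw [dif_neg]
            rintro ⟨h', hh'⟩
            exact hg ⟨h⁻¹ * h', by rw [map_mul, map_inv, hh']; group⟩
          simpa only [heq] using hy0 g
      · funext h
        have he : ∃ h', ι h' = ι h := ⟨h, rfl⟩
        simp only [dif_pos he]
        congr 1
        exact hι he.choose_spec
end

section
/- In the Diestel–Leader description of the lamplighter group's Cayley graph, whose vertex set is {(x,y) ∈ T₂ × T₂ : β(x) + β(y) = 0}, where T₂ is the 3-regular tree oriented with out-degree 1 and β its height function, the map sending (s,n) ∈ (Z/2)^(E) ⋊ Z to the corresponding pair of tree vertices is a bijection onto this vertex set. -/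
/-!
The Diestel–Leader description of the lamplighter group.  Model the full
binary tree `T₂` by pairs `(n, f)` with `n ∈ ℤ` the height and `f : ℤ → ℤ/2` a
finitely supported lamp configuration supported on positions `≥ n` (position
`m` stands for the half-integer `m + ½ > n`); `β(n,f) = n`.  The lamplighter
group is the set of pairs `(s, n)` with `s : ℤ → ℤ/2` finitely supported and
`n ∈ ℤ`.  Splitting `s` at `n` into its parts below and above `n` (the part
below being reflected, and placed at height `-n`) gives a bijection from the
lamplighter group onto `{(x, y) ∈ T₂ × T₂ : β(x) + β(y) = 0}`.
-/

/-- Vertices of the full binary tree `T₂`: a height `n` and a finitely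
supported configuration supported on positions `≥ n`. -/
def T2 : Set (ℤ × (ℤ → ZMod 2)) :=
  {p | (∀ m : ℤ, m < p.1 → p.2 m = 0) ∧ {m : ℤ | p.2 m ≠ 0}.Finite}

/-- The lamplighter group, as pairs (finitely supported lamp configuration,
position of the lamplighter). -/
def lampSet : Set ((ℤ → ZMod 2) × ℤ) :=
  {p | {m : ℤ | p.1 m ≠ 0}.Finite}

/-- The vertex set of the Diestel–Leader graph `DL(2,2)`:
`{(x,y) ∈ T₂ × T₂ : β(x) + β(y) = 0}`. -/
def dlSet : Set ((ℤ × (ℤ → ZMod 2)) × (ℤ × (ℤ → ZMod 2))) :=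
  {p | p.1 ∈ T2 ∧ p.2 ∈ T2 ∧ p.1.1 + p.2.1 = 0}

/-- Split the lamp configuration `s` at position `n` into its parts below and
above `n`: the part below `n`, reflected (`m ↦ -1-m`), gives a vertex at
height `-n` of the first tree, the part above gives a vertex at height `n` of
the second tree. -/
def dlMap (p : (ℤ → ZMod 2) × ℤ) :
    (ℤ × (ℤ → ZMod 2)) × (ℤ × (ℤ → ZMod 2)) :=
  ((-p.2, fun m => if -p.2 ≤ m then p.1 (-1 - m) else 0),
    (p.2, fun m => if p.2 ≤ m then p.1 m else 0))

/-- The splitting map is a bijection from the lamplighter group onto the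
vertex set of the Diestel–Leader graph. -/
theorem lamplighter_diestelLeader_bijection :
    Set.BijOn dlMap lampSet dlSet := by
  refine ⟨?_, ?_, ?_⟩
  · rintro ⟨s, n⟩ hs
    refine ⟨⟨fun m hm => if_neg (by simp only [dlMap] at hm ⊢; omega), ?_⟩,
      ⟨fun m hm => if_neg (by simp only [dlMap] at hm ⊢; omega), ?_⟩, by simp [dlMap]⟩
    · apply Set.Finite.subset (hs.image (fun m => -1 - m))
      intro m hm
      simp only [dlMap, Set.mem_setOf_eq] at hm
      by_cases h : -n ≤ m
      · exact ⟨-1 - m, by simpa [h] using hm, by ring⟩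
      · simp [h] at hm
    · apply Set.Finite.subset hs
      intro m hm
      simp only [dlMap, Set.mem_setOf_eq] at hm
      by_cases h : n ≤ m
      · simpa [h] using hm
      · simp [h] at hm
  · rintro ⟨s, n⟩ _ ⟨t, k⟩ _ h
    simp only [dlMap, Prod.mk.injEq] at h
    obtain ⟨⟨-, hf⟩, hk, hg⟩ := h
    subst hk
    simp only [Prod.mk.injEq]
    refine ⟨funext fun m => ?_, trivial⟩
    by_cases hm : n ≤ m
    · simpa [hm] using congrFun hg m
    · have h1 : -n ≤ -1 - m := by omega
      simpa [h1, show -1 - (-1 - m) = m by ring] using congrFun hf (-1 - m)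
  · rintro ⟨⟨a, f⟩, ⟨b, g⟩⟩ ⟨⟨hf0, hff⟩, ⟨hg0, hgf⟩, hab⟩
    simp only at hab hf0 hg0
    refine ⟨(fun m => if b ≤ m then g m else f (-1 - m), b), ?_, ?_⟩
    · apply Set.Finite.subset (hgf.union (hff.image (fun m => -1 - m)))
      intro m hm
      simp only [Set.mem_setOf_eq] at hm
      by_cases h : b ≤ m
      · left; simpa [h] using hm
      · right; exact ⟨-1 - m, by simpa [h] using hm, by ring⟩
    · simp only [dlMap, Prod.mk.injEq]
      refine ⟨⟨by omega, funext fun m => ?_⟩, trivial, funext fun m => ?_⟩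
      · by_cases h : -b ≤ m
        · have h' : ¬ b ≤ -1 - m := by omega
          simp [h, h', show -1 - (-1 - m) = m by ring]
        · simp only [h, if_false]
          exact (hf0 m (by omega)).symm
      · by_cases h : b ≤ m
        · simp [h]
        · simp only [h, if_false]
          exact (hg0 m (by omega)).symm
end

section
/- Fix k ≥ 0 and the affine maps f₀(x) = 2x, f₁(x) = 2x/3 on R. There exists a bi-infinite sequence (x_n)_{n∈Z} in [1/2, 2] and (i_n) ∈ {0,1}^Z with x_{n+1} = f_{i_n}(x_n) for all n, but there is no periodic such sequence: no x ∈ [1/2,2] and finite word i_0…i_{p−1} with p ≥ 1 satisfy f_{i_{p−1}} ∘ ⋯ ∘ f_{i_0}(x) = x unless the composed map is the identity, which never happens. -/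
/-!
Write `2ⁿ = m · 3ᵏ` with `k = ⌊log₃ 2ⁿ⌋` and mantissa `m ∈ [1, 3)`, for every `n ∈ ℤ`. Multiplying by
`2 ≤ 3` raises `k` by `0` or `1`, so `xₙ = m/2 ∈ [1/2, 3/2)` is a bi-infinite orbit, with `iₙ`
recording whether `k` went up. Conversely, along any orbit `3ᵇ y_p = 2ᵖ y₀`, where `b` counts the
applications of `f₁`; a periodic orbit would force `3ᵇ = 2ᵖ` with `p ≥ 1`, which parity forbids.
-/

namespace Int

theorem log_mul_eq_or_eq_add_one {R : Type*} [Semifield R] [LinearOrder R] [IsStrictOrderedRing R]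
    [FloorSemiring R] {b : ℕ} {a r : R} (hb : 1 < b) (ha : 1 ≤ a) (hab : a ≤ b) (hr : 0 < r) :
    log b (a * r) = log b r ∨ log b (a * r) = log b r + 1 := by
  have hle : log b r ≤ log b (a * r) := log_mono_right hr (le_mul_of_one_le_left hr.le ha)
  have hlt : log b (a * r) < log b r + 1 + 1 := by
    rw [← lt_zpow_iff_log_lt hb (by positivity), zpow_add_one₀ (by positivity)]
    calc a * r < a * (b : R) ^ (log b r + 1) := by gcongr; exact lt_zpow_succ_log_self hb r
      _ ≤ (b : R) * (b : R) ^ (log b r + 1) := by gcongr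
      _ = _ := mul_comm _ _
  omega

end Int

section Mantissa

variable {R : Type*} [Semifield R] [LinearOrder R] [FloorSemiring R]

def mantissa (b : ℕ) (r : R) : R := r / (b : R) ^ Int.log b r

variable {b : ℕ} {a r : R}

theorem mantissa_mem_Ico [IsStrictOrderedRing R] (hb : 1 < b) (hr : 0 < r) :
    mantissa b r ∈ Set.Ico 1 (b : R) := by
  have hb₀ : (0 : R) < b := by exact_mod_cast zero_lt_one.trans hb
  have hpos : (0 : R) < (b : R) ^ Int.log b r := zpow_pos hb₀ _
  refine ⟨(one_le_div hpos).2 (Int.zpow_log_le_self hb hr), (div_lt_iff₀ hpos).2 ?_⟩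
  rw [mul_comm, ← zpow_add_one₀ hb₀.ne']
  exact Int.lt_zpow_succ_log_self hb r

theorem mantissa_mul_of_log_eq (h : Int.log b (a * r) = Int.log b r) :
    mantissa b (a * r) = a * mantissa b r := by
  rw [mantissa, mantissa, h, mul_div_assoc]

theorem mantissa_mul_of_log_eq_add_one (hb : (b : R) ≠ 0)
    (h : Int.log b (a * r) = Int.log b r + 1) : mantissa b (a * r) = a * mantissa b r / b := by
  rw [mantissa, mantissa, h, zpow_add_one₀ hb, mul_div_assoc, mul_div_assoc, div_mul_eq_div_div]

end Mantissa

theorem exists_biInfinite_orbit :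
    ∃ (x : ℤ → ℝ) (i : ℤ → Bool),
      (∀ n : ℤ, x n ∈ Set.Icc (1 / 2 : ℝ) 2) ∧
      (∀ n : ℤ, x (n + 1) = if i n then 2 * x n / 3 else 2 * x n) := by
  refine ⟨fun n ↦ mantissa 3 ((2 : ℝ) ^ n) / 2,
    fun n ↦ Int.log 3 ((2 : ℝ) ^ (n + 1)) = Int.log 3 ((2 : ℝ) ^ n) + 1, fun n ↦ ?_, fun n ↦ ?_⟩
  · obtain ⟨h₁, h₃⟩ := mantissa_mem_Ico (R := ℝ) (by norm_num : 1 < 3) (zpow_pos two_pos n)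
    push_cast at h₃
    constructor <;> linarith
  · have hsucc : (2 : ℝ) ^ (n + 1) = 2 * 2 ^ n := by rw [zpow_add_one₀ two_ne_zero, mul_comm]
    simp only [hsucc]
    rcases Int.log_mul_eq_or_eq_add_one (R := ℝ) (b := 3) (a := 2) (by norm_num) (by norm_num)
      (by norm_num) (zpow_pos two_pos n) with h | h
    · rw [mantissa_mul_of_log_eq h, h, if_neg (by simp)]
      ring
    · rw [mantissa_mul_of_log_eq_add_one (by norm_num) h, h, if_pos (by simp)]
      push_cast
      ring

theorem exists_three_pow_mul_eq_two_pow_mul {y : ℕ → ℝ} {i : ℕ → Bool} {p : ℕ}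
    (hy : ∀ k < p, y (k + 1) = if i k then 2 * y k / 3 else 2 * y k) :
    ∃ b : ℕ, 3 ^ b * y p = 2 ^ p * y 0 := by
  induction p with
  | zero => exact ⟨0, by simp⟩
  | succ p ih =>
    obtain ⟨b, hb⟩ := ih fun k hk ↦ hy k (hk.trans p.lt_succ_self)
    rw [hy p p.lt_succ_self]
    cases i p
    · exact ⟨b, by rw [if_neg Bool.false_ne_true, pow_succ]; linear_combination 2 * hb⟩
    · exact ⟨b + 1, by rw [if_pos rfl, pow_succ, pow_succ]; linear_combination 2 * hb⟩

theorem three_pow_ne_two_pow {b p : ℕ} (hp : p ≠ 0) : 3 ^ b ≠ 2 ^ p := by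
  intro h
  have hodd : Odd (2 ^ p) := h ▸ Odd.pow (by decide)
  exact Nat.not_even_iff_odd.2 hodd ((Nat.even_pow' hp).2 even_two)

theorem orbit_not_periodic {p : ℕ} (hp : p ≠ 0) {i : ℕ → Bool} {y : ℕ → ℝ} (hy₀ : y 0 ≠ 0)
    (hy : ∀ k < p, y (k + 1) = if i k then 2 * y k / 3 else 2 * y k) : y p ≠ y 0 := by
  intro hyp
  obtain ⟨b, hb⟩ := exists_three_pow_mul_eq_two_pow_mul hy
  rw [hyp] at hb
  have hpow : ((3 ^ b : ℕ) : ℝ) = ((2 ^ p : ℕ) : ℝ) := by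
    push_cast
    exact mul_right_cancel₀ hy₀ hb
  exact three_pow_ne_two_pow hp (by exact_mod_cast hpow)

theorem kari_orbits :
    -- a bi-infinite orbit in [1/2, 2] exists
    (∃ (x : ℤ → ℝ) (i : ℤ → Bool),
      (∀ n : ℤ, x n ∈ Set.Icc (1 / 2 : ℝ) 2) ∧
      (∀ n : ℤ, x (n + 1) = if i n then 2 * x n / 3 else 2 * x n)) ∧
    -- but no periodic orbit
    (∀ p : ℕ, 1 ≤ p → ∀ (i : ℕ → Bool) (x : ℝ), x ∈ Set.Icc (1 / 2 : ℝ) 2 →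
      ∀ y : ℕ → ℝ, y 0 = x →
        (∀ k : ℕ, k < p → y (k + 1) = if i k then 2 * y k / 3 else 2 * y k) →
        y p ≠ x) := by
  refine ⟨exists_biInfinite_orbit, fun p hp i x hx y hy₀ hy ↦ ?_⟩
  subst hy₀
  exact orbit_not_periodic (by omega) (lt_of_lt_of_le (by norm_num) hx.1).ne' hy
end
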